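/- Every signed word with exactly one letter is cyclically equivalent to AA (the one-letter positive signed word); in particular AA and ĀĀ (the one-letter negative signed word) are cyclically equivalent. Every signed word with exactly two letters is cyclically equivalent to an isomorphic copy of exactly one of the four signed words AABB, AAB̄B̄, AB̄B̄A, ABAB (where a bar denotes a negative letter and unbarred letters are positive). -/

import Mathlib

/-- Letters are indexed by natural numbers; a signed letter carries a sign
(`true` = `+`, `false` = `−`). -/
abbrev Letter : Type := ℕ × Bool

/-- A signed word: every entry occurs exactly twice, and the two occurrences of
any letter carry the same sign. -/
def IsSignedWord (w : List Letter) : Prop :=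
  ∀ p ∈ w, w.count p = 2 ∧ ∀ q ∈ w, q.1 = p.1 → q.2 = p.2

/-- Signed words (concrete representatives; isomorphism is subsumed by cyclic
equivalence below). -/
def SignedWord : Type := {w : List Letter // IsSignedWord w}

/-- The set of letters occurring in a list of signed letters. -/
def lettersL (w : List Letter) : Finset ℕ := (w.map Prod.fst).toFinset

/-- The set of letters of a signed word. -/
def SignedWord.letters (w : SignedWord) : Finset ℕ := lettersL w.1

/-- The number of (distinct) letters of a signed word. -/
def SignedWord.numLetters (w : SignedWord) : ℕ := w.letters.card

theorem isSignedWord_filter (q : ℕ → Bool) {w : List Letter} (hw : IsSignedWord w) :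
    IsSignedWord (w.filter fun p => q p.1) := by
  intro p hp
  rw [List.mem_filter] at hp
  refine ⟨?_, fun r hr => (hw p hp.1).2 r (List.mem_filter.mp hr).1⟩
  rw [List.count_filter (p := fun r : Letter => q r.1) hp.2]
  exact (hw p hp.1).1

/-- Delete both occurrences of every letter of `T` from `w`. -/
def SignedWord.delete (w : SignedWord) (T : Finset ℕ) : SignedWord :=
  ⟨w.1.filter fun p => decide (p.1 ∉ T), isSignedWord_filter (fun a => decide (a ∉ T)) w.2⟩

/-- The induced signed subword of `w` on a set `U` of letters. -/
def SignedWord.restrict (w : SignedWord) (U : Finset ℕ) : SignedWord :=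
  ⟨w.1.filter fun p => decide (p.1 ∈ U), isSignedWord_filter (fun a => decide (a ∈ U)) w.2⟩

/-- Sign-preserving relabeling of letters. -/
def Iso (w w' : List Letter) : Prop :=
  ∃ f : ℕ ≃ ℕ, w' = w.map fun p => (f p.1, p.2)

/-- The basic move `A^ε x A^ε y ↦ x A^(−ε) y A^(−ε)`. -/
def Move (w w' : List Letter) : Prop :=
  ∃ (a : ℕ) (s : Bool) (x y : List Letter),
    w = (a, s) :: (x ++ (a, s) :: y) ∧ w' = x ++ (a, !s) :: (y ++ [(a, !s)])

/-- Cyclic equivalence of signed words: the equivalence relation generated by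
isomorphism together with the basic move. -/
def CyclicEquivL : List Letter → List Letter → Prop :=
  Relation.EqvGen fun w w' => Iso w w' ∨ Move w w'

/-- Cyclic equivalence of signed words. -/
def SignedWord.CyclicEquiv (w w' : SignedWord) : Prop := CyclicEquivL w.1 w'.1

/-- A cyclic equivalence invariant with values in `F`. -/
def WordInvariant (F : Type*) [Field F] (v : SignedWord → F) : Prop :=
  ∀ w w' : SignedWord, w.CyclicEquiv w' → v w = v w'

/-- The prolongation of `v` to the singular signed word `(w, S)` (the letters of
`S` being declared singular), given by inclusion–exclusion. -/
def prolong (F : Type*) [Field F] (v : SignedWord → F) (w : SignedWord) (S : Finset ℕ) : F :=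
  ∑ T ∈ S.powerset, (-1 : F) ^ T.card * v (w.delete T)

/-- `v` is a finite type invariant of degree ≤ `n`: it is a cyclic equivalence
invariant whose prolongation vanishes on every singular signed word with more
than `n` singular letters. -/
def FiniteTypeLe (F : Type*) [Field F] (n : ℕ) (v : SignedWord → F) : Prop :=
  WordInvariant F v ∧
    ∀ (w : SignedWord) (S : Finset ℕ), S ⊆ w.letters → n < S.card →
      prolong F v w S = 0

/-- The empty signed word `φ`. -/
def wordEmpty : SignedWord := ⟨[], by intro p hp; simp at hp⟩

/-- The one-letter positive signed word `AA`. -/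
def wordAA : SignedWord := ⟨[(0, true), (0, true)], by unfold IsSignedWord; decide⟩

/-- The one-letter negative signed word `ĀĀ`. -/
def wordAAneg : SignedWord := ⟨[(0, false), (0, false)], by unfold IsSignedWord; decide⟩

/-- The two-letter signed word `AABB`. -/
def wordAABB : SignedWord := ⟨[(0, true), (0, true), (1, true), (1, true)], by unfold IsSignedWord; decide⟩

/-- The two-letter signed word `AAB̄B̄`. -/
def wordAABnBn : SignedWord := ⟨[(0, true), (0, true), (1, false), (1, false)], by unfold IsSignedWord; decide⟩

/-- The two-letter signed word `AB̄B̄A`. -/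
def wordABnBnA : SignedWord := ⟨[(0, true), (1, false), (1, false), (0, true)], by unfold IsSignedWord; decide⟩

/-- The two-letter signed word `ABAB`. -/
def wordABAB : SignedWord := ⟨[(0, true), (1, true), (0, true), (1, true)], by unfold IsSignedWord; decide⟩

/-- The underlying list of the word `A₁A₁A₂A₂…AₙAₙ` (all letters positive). -/
def wListN (n : ℕ) : List Letter := (List.range n).flatMap fun i => [(i, true), (i, true)]

/-- `Ncount u w`: the number of `k`-element subsets of the letters of `w`
(`k` = number of letters of `u`) whose induced signed subword is cyclically
equivalent to (an isomorphic copy of) `u`. -/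
noncomputable def Ncount (u w : SignedWord) : ℕ := by
  classical
  exact (w.letters.powerset.filter fun U =>
    U.card = u.numLetters ∧ (w.restrict U).CyclicEquiv u).card

theorem prolong_add (F : Type*) [Field F] (v₁ v₂ : SignedWord → F) (w : SignedWord) (S : Finset ℕ) :
    prolong F (v₁ + v₂) w S = prolong F v₁ w S + prolong F v₂ w S := by
  simp [prolong, ← Finset.sum_add_distrib, mul_add]

theorem prolong_smul (F : Type*) [Field F] (c : F) (v : SignedWord → F) (w : SignedWord) (S : Finset ℕ) :
    prolong F (c • v) w S = c * prolong F v w S := by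
  rw [prolong, prolong, Finset.mul_sum]
  exact Finset.sum_congr rfl fun T _ => by simp [mul_left_comm]

/-- The `F`-vector space `Vₙ` of finite type invariants of degree ≤ `n`. -/
def Vn (F : Type*) [Field F] (n : ℕ) : Submodule F (SignedWord → F) where
  carrier := {v | FiniteTypeLe F n v}
  add_mem' := by
    rintro v₁ v₂ ⟨h1, h1'⟩ ⟨h2, h2'⟩
    refine ⟨fun w w' h => by simp [h1 w w' h, h2 w w' h], fun w S hS hc => ?_⟩
    rw [prolong_add, h1' w S hS hc, h2' w S hS hc, add_zero]
  zero_mem' := ⟨fun _ _ _ => rfl, fun w S hS hc => by simp [prolong]⟩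
  smul_mem' := by
    rintro c v ⟨h, h'⟩
    refine ⟨fun w w' hww => by simp [h w w' hww], fun w S hS hc => ?_⟩
    rw [prolong_smul, h' w S hS hc, mul_zero]

/-- Cyclic equivalence as a setoid on signed words. -/
def cycSetoid : Setoid SignedWord :=
  ⟨SignedWord.CyclicEquiv, fun w => Relation.EqvGen.refl w.1,
    fun h => Relation.EqvGen.symm _ _ h, fun h h' => Relation.EqvGen.trans _ _ _ h h'⟩

/-!
A move carries the first letter once around the end of the word and flips its sign. Hence, for a
two-letter word whose letters are not interlaced, the number of letters that are positive and
adjacent, or negative and split by the end of the word, does not change under moves; it is 2, 1, 0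
on `AABB`, `AAB̄B̄`, `AB̄B̄A`, and together with interlacing (`ABAB`) it separates the four classes.
Conversely, after relabeling every two-letter word has the shape `AABB`, `ABBA` or `ABAB` with some
signs, and at most three moves lead from it to the representative of its class.
-/

namespace CyclicEquivL

lemma refl (w : List Letter) : CyclicEquivL w w := Relation.EqvGen.refl w

lemma symm {w w' : List Letter} (h : CyclicEquivL w w') : CyclicEquivL w' w :=
  Relation.EqvGen.symm _ _ h

lemma trans {w w' w'' : List Letter} (h : CyclicEquivL w w') (h' : CyclicEquivL w' w'') :
    CyclicEquivL w w'' :=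
  Relation.EqvGen.trans _ _ _ h h'

lemma of_iso {w w' : List Letter} (h : Iso w w') : CyclicEquivL w w' :=
  Relation.EqvGen.rel _ _ (Or.inl h)

lemma of_move {w w' : List Letter} (h : Move w w') : CyclicEquivL w w' :=
  Relation.EqvGen.rel _ _ (Or.inr h)

end CyclicEquivL

lemma exists_equiv_apply_eq_zero_and_one {a b : ℕ} (hab : a ≠ b) :
    ∃ f : ℕ ≃ ℕ, f a = 0 ∧ f b = 1 := by
  refine ⟨(Equiv.swap a 0).trans (Equiv.swap (Equiv.swap a 0 b) 1), ?_, by simp⟩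
  have h : Equiv.swap a 0 b ≠ 0 := by
    rw [Ne, Equiv.swap_apply_eq_iff, Equiv.swap_apply_right]
    exact hab.symm
  simp [Equiv.swap_apply_of_ne_of_ne h.symm one_ne_zero.symm]

lemma IsSignedWord.eq_of_fst_eq {w : List Letter} (hw : IsSignedWord w) {p q : Letter}
    (hp : p ∈ w) (hq : q ∈ w) (h : q.1 = p.1) : q = p :=
  Prod.ext h ((hw p hp).2 q hq h)

lemma IsSignedWord.length_eq {w : List Letter} (hw : IsSignedWord w) :
    w.length = 2 * (lettersL w).card := by
  have hinj : Set.InjOn Prod.fst (w.toFinset : Set Letter) := fun p hp q hq h =>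
    (hw.eq_of_fst_eq (List.mem_toFinset.mp hp) (List.mem_toFinset.mp hq) h.symm).symm
  have hletters : lettersL w = w.toFinset.image Prod.fst := by ext; simp [lettersL]
  rw [hletters, Finset.card_image_of_injOn hinj, ← List.sum_toFinset_count_eq_length, mul_comm]
  exact Finset.sum_const_nat fun p hp => by convert (hw p (List.mem_toFinset.mp hp)).1

lemma IsSignedWord.exists_shape {p₁ p₂ p₃ p₄ : Letter} (hw : IsSignedWord [p₁, p₂, p₃, p₄]) :
    ∃ p q : Letter, p.1 ≠ q.1 ∧
      ([p₁, p₂, p₃, p₄] = [p, p, q, q] ∨ [p₁, p₂, p₃, p₄] = [p, q, q, p] ∨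
        [p₁, p₂, p₃, p₄] = [p, q, p, q]) := by
  have hc₁ := (hw p₁ (by simp)).1
  have hc₂ := (hw p₂ (by simp)).1
  have hc₃ := (hw p₃ (by simp)).1
  have hne : ∀ q ∈ [p₁, p₂, p₃, p₄], q ≠ p₁ → q.1 ≠ p₁.1 := fun q hq hqp h =>
    hqp (hw.eq_of_fst_eq (by simp) hq h)
  simp only [List.count_cons, List.count_nil, beq_iff_eq] at hc₁ hc₂ hc₃
  simp only [List.mem_cons, List.not_mem_nil, or_false, forall_eq_or_imp, forall_eq] at hne
  by_cases h₂ : p₂ = p₁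
  · refine ⟨p₁, p₃, ?_, Or.inl ?_⟩ <;> grind
  by_cases h₃ : p₃ = p₁
  · refine ⟨p₁, p₂, ?_, Or.inr (Or.inr ?_)⟩ <;> grind
  · refine ⟨p₁, p₂, ?_, Or.inr (Or.inl ?_)⟩ <;> grind

-- Lists that are not two-letter words also get the value 3, which keeps moves from changing it.
def classIndex : List Letter → ℕ
  | [p, q, r, u] =>
    if p = q ∧ r = u ∧ p.1 ≠ r.1 then 2 - (p.2.toNat + r.2.toNat)
    else if p = u ∧ q = r ∧ p.1 ≠ q.1 then 2 - ((!p.2).toNat + q.2.toNat)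
    else 3
  | _ => 3

lemma classIndex_of_length_ne {w : List Letter} (h : w.length ≠ 4) : classIndex w = 3 := by
  rcases w with _ | ⟨p, _ | ⟨q, _ | ⟨r, _ | ⟨u, _ | ⟨v, l⟩⟩⟩⟩⟩ <;> simp_all [classIndex]

lemma classIndex_iso {w w' : List Letter} (h : Iso w w') : classIndex w = classIndex w' := by
  obtain ⟨f, rfl⟩ := h
  rcases w with _ | ⟨p, _ | ⟨q, _ | ⟨r, _ | ⟨u, _ | ⟨v, l⟩⟩⟩⟩⟩ <;>
    simp [classIndex, Prod.ext_iff]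

lemma classIndex_move_cases (a : ℕ) (s : Bool) (c d : Letter) :
    classIndex [(a, s), (a, s), c, d] = classIndex [(a, !s), c, d, (a, !s)] ∧
    classIndex [(a, s), c, (a, s), d] = classIndex [c, (a, !s), d, (a, !s)] ∧
    classIndex [(a, s), c, d, (a, s)] = classIndex [c, d, (a, !s), (a, !s)] := by
  obtain ⟨c, u⟩ := c
  obtain ⟨d, v⟩ := d
  cases s <;> cases u <;> cases v <;>
    by_cases h1 : a = c <;> by_cases h2 : a = d <;> by_cases h3 : c = d <;>
    simp_all [classIndex] <;> omega

lemma classIndex_move {w w' : List Letter} (h : Move w w') : classIndex w = classIndex w' := by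
  obtain ⟨a, s, x, y, rfl, rfl⟩ := h
  by_cases hl : x.length + y.length = 2
  · rcases x with _ | ⟨c, _ | ⟨d, _ | ⟨e, x⟩⟩⟩ <;> rcases y with _ | ⟨c', _ | ⟨d', _ | ⟨e', y⟩⟩⟩ <;>
      simp only [List.length_cons, List.length_nil] at hl <;> try omega
    · exact (classIndex_move_cases a s c' d').1
    · exact (classIndex_move_cases a s c c').2.1
    · exact (classIndex_move_cases a s c d).2.2
  · rw [classIndex_of_length_ne, classIndex_of_length_ne] <;> simp <;> omega

lemma classIndex_eq_of_cyclicEquivL {w w' : List Letter} (h : CyclicEquivL w w') :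
    classIndex w = classIndex w' := by
  induction h with
  | rel _ _ h => exact h.elim classIndex_iso classIndex_move
  | refl => rfl
  | symm _ _ _ ih => exact ih.symm
  | trans _ _ _ _ _ ih ih' => exact ih.trans ih'

def smallWord (i : Fin 4) : List Letter :=
  (![wordAABB, wordAABnBn, wordABnBnA, wordABAB] i).1

lemma classIndex_smallWord (i : Fin 4) : classIndex (smallWord i) = i := by
  fin_cases i <;> rfl

lemma smallWord_eq_of_cyclicEquivL {i j : Fin 4} (h : CyclicEquivL (smallWord i) (smallWord j)) :
    i = j := by
  have := classIndex_eq_of_cyclicEquivL h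
  rw [classIndex_smallWord, classIndex_smallWord] at this
  exact Fin.ext this

def separatedWord (s t : Bool) : List Letter := [(0, s), (0, s), (1, t), (1, t)]

def nestedWord (s t : Bool) : List Letter := [(0, s), (1, t), (1, t), (0, s)]

def interlacedWord (s t : Bool) : List Letter := [(0, s), (1, t), (0, s), (1, t)]

lemma separatedWord_cyclicEquivL (s t : Bool) :
    CyclicEquivL (separatedWord s t) (nestedWord (!s) t) :=
  .of_move ⟨0, s, [], [(1, t), (1, t)], rfl, rfl⟩

lemma nestedWord_cyclicEquivL (s t : Bool) :
    CyclicEquivL (nestedWord s t) (separatedWord t (!s)) :=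
  (CyclicEquivL.of_move ⟨0, s, [(1, t), (1, t)], [], rfl, rfl⟩).trans
    (.of_iso ⟨Equiv.swap 0 1, by simp [separatedWord]⟩)

lemma interlacedWord_cyclicEquivL (s t : Bool) :
    CyclicEquivL (interlacedWord s t) (interlacedWord t (!s)) :=
  (CyclicEquivL.of_move ⟨0, s, [(1, t)], [(1, t)], rfl, rfl⟩).trans
    (.of_iso ⟨Equiv.swap 0 1, by simp [interlacedWord]⟩)

lemma exists_separatedWord_cyclicEquivL_smallWord (s t : Bool) :
    ∃ i, CyclicEquivL (separatedWord s t) (smallWord i) := by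
  cases s <;> cases t
  · exact ⟨2, separatedWord_cyclicEquivL false false⟩
  · exact ⟨1, (separatedWord_cyclicEquivL false true).trans (nestedWord_cyclicEquivL true true)⟩
  · exact ⟨1, .refl _⟩
  · exact ⟨0, .refl _⟩

lemma exists_nestedWord_cyclicEquivL_smallWord (s t : Bool) :
    ∃ i, CyclicEquivL (nestedWord s t) (smallWord i) :=
  (exists_separatedWord_cyclicEquivL_smallWord t (!s)).imp fun _ =>
    (nestedWord_cyclicEquivL s t).trans

lemma interlacedWord_cyclicEquivL_smallWord (s t : Bool) :
    CyclicEquivL (interlacedWord s t) (smallWord 3) := by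
  have := interlacedWord_cyclicEquivL
  cases s <;> cases t
  · exact (this false false).trans (this false true)
  · exact this false true
  · exact (this true false).trans ((this false false).trans (this false true))
  · exact .refl _

lemma exists_cyclicEquivL_smallWord {w : List Letter} (hw : IsSignedWord w)
    (hcard : (lettersL w).card = 2) : ∃ i, CyclicEquivL w (smallWord i) := by
  have hlen : w.length = 4 := by rw [hw.length_eq, hcard]
  obtain ⟨p₁, p₂, p₃, p₄, rfl⟩ := List.length_eq_four.mp hlen
  obtain ⟨p, q, hpq, hshape⟩ := hw.exists_shape
  obtain ⟨f, hfp, hfq⟩ := exists_equiv_apply_eq_zero_and_one hpq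
  rcases hshape with hw' | hw' | hw' <;> rw [hw']
  · exact (exists_separatedWord_cyclicEquivL_smallWord p.2 q.2).imp fun _ =>
      (CyclicEquivL.of_iso ⟨f, by simp [separatedWord, hfp, hfq]⟩).trans
  · exact (exists_nestedWord_cyclicEquivL_smallWord p.2 q.2).imp fun _ =>
      (CyclicEquivL.of_iso ⟨f, by simp [nestedWord, hfp, hfq]⟩).trans
  · exact ⟨3, (CyclicEquivL.of_iso ⟨f, by simp [interlacedWord, hfp, hfq]⟩).trans
      (interlacedWord_cyclicEquivL_smallWord p.2 q.2)⟩

lemma cyclicEquivL_wordAA {w : List Letter} (hw : IsSignedWord w)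
    (hcard : (lettersL w).card = 1) : CyclicEquivL w wordAA.1 := by
  have hlen : w.length = 2 := by rw [hw.length_eq, hcard]
  obtain ⟨p, q, rfl⟩ := List.length_eq_two.mp hlen
  have hqp : q = p := by
    have := (hw p (by simp)).1
    simp_all [List.count_cons]
  subst hqp
  obtain ⟨a, s⟩ := q
  have hiso : CyclicEquivL [(a, s), (a, s)] [(0, s), (0, s)] :=
    .of_iso ⟨Equiv.swap a 0, by simp⟩
  cases s
  · exact hiso.trans (.of_move ⟨0, false, [], [], rfl, rfl⟩)
  · exact hiso

/-- every one-letter signed word is cyclically equivalent to `AA`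
(in particular `AA ~ ĀĀ`), and every two-letter signed word is cyclically
equivalent to (an isomorphic copy of) exactly one of
`AABB`, `AAB̄B̄`, `AB̄B̄A`, `ABAB`. -/
theorem classification_of_small_words :
    (∀ w : SignedWord, w.numLetters = 1 → w.CyclicEquiv wordAA) ∧
    wordAA.CyclicEquiv wordAAneg ∧
    (∀ w : SignedWord, w.numLetters = 2 →
      ∃! i : Fin 4, w.CyclicEquiv (![wordAABB, wordAABnBn, wordABnBnA, wordABAB] i)) := by
  refine ⟨fun w hw => cyclicEquivL_wordAA w.2 hw, .of_move ⟨0, true, [], [], rfl, rfl⟩,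
    fun w hw => ?_⟩
  obtain ⟨i, hi⟩ := exists_cyclicEquivL_smallWord w.2 hw
  exact ⟨i, hi, fun j hj => smallWord_eq_of_cyclicEquivL (hj.symm.trans hi)⟩
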